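/- Let I = [1/2, 0.668] and suppose that for every polynomial p with constant term 1, coefficients in {−1,0,1}, and any degree, and every ρ > 0, Leb{λ ∈ I : |p(λ)| ≤ ρ} ≤ C ρ. Let (α_N) be positive reals with Σ_N 3^N α_N < ∞. Then for Lebesgue-almost every λ ∈ I, the minimal gap g_N(λ) of A'_N(λ) (the smallest positive difference between distinct elements) satisfies g_N(λ) > α_N for infinitely many N. -/

import Mathlib

/-!
Two distinct points of `A'_N(λ)` differ by `Σ_{n<N} d_n λ^n` with digits `d_n ∈ {-1, 0, 1}`.
Factoring out `λ^k` at the lowest nonzero digit and normalising its sign writes every gap as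
`λ^k |p(λ)|` with `p` a `{0, ±1}` polynomial of degree `≤ N - 1 - k` and constant term `1`.
Since `λ ≥ 1/2`, a gap `g_N(λ) ≤ α_N` puts `λ` in a sublevel set `|p(λ)| ≤ 2^k · 2α_N`; there
are `3^(N-1-k)` such `p`, so the union of these sets has measure
`≤ C Σ_k 3^(N-1-k) 2^k · 2α_N ≤ 2C · 3^N α_N`, which is summable. Borel–Cantelli concludes.
-/

open MeasureTheory Filter

/-- The set `A'_N(λ) = { Σ_{n=0}^{N-1} a_n λ^n : a_n ∈ {0,1} }`. -/
def Aprime (lam : ℝ) (N : ℕ) : Set ℝ :=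
  {x | ∃ a : Fin N → Bool, x = ∑ n : Fin N, if a n then lam ^ (n : ℕ) else 0}

/-- The minimal gap of `A'_N(λ)`: the smallest positive difference between elements. -/
noncomputable def minGap (lam : ℝ) (N : ℕ) : ℝ :=
  sInf {d : ℝ | 0 < d ∧ ∃ x ∈ Aprime lam N, ∃ y ∈ Aprime lam N, d = |x - y|}

open Finset

def coeffOfTail {m : ℕ} (v : Fin m → SignType) : ℕ → ℝ
  | 0 => 1
  | n + 1 => if h : n < m then v ⟨n, h⟩ else 0

lemma coeffOfTail_mem {m : ℕ} (v : Fin m → SignType) (n : ℕ) :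
    coeffOfTail v n ∈ ({-1, 0, 1} : Set ℝ) := by
  rcases n with _ | n
  · simp [coeffOfTail]
  · simp only [coeffOfTail]
    split_ifs with h
    · rcases SignType.trichotomy (v ⟨n, h⟩) with h | h | h <;> simp [h]
    · simp

def HasSublevelBound (s : Set ℝ) (C : ℝ) : Prop :=
  ∀ (m : ℕ) (c : ℕ → ℝ), c 0 = 1 → (∀ n, c n ∈ ({-1, 0, 1} : Set ℝ)) →
    ∀ ρ > 0, volume {lam : ℝ | lam ∈ s ∧ |∑ n ∈ range (m + 1), c n * lam ^ n| ≤ ρ} ≤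
      ENNReal.ofReal (C * ρ)

/-- Every gap of `A'_N(lam)` is `|lam| ^ (N - 1 - m) * |p lam|` with `p = coeffOfTail v`, so for
`lam ≥ 1/2` a gap `≤ ε` puts `lam` in this set. -/
def badSet (s : Set ℝ) (N : ℕ) (ε : ℝ) : Set ℝ :=
  ⋃ m ∈ range N, ⋃ v : Fin m → SignType,
    {lam | lam ∈ s ∧ |∑ n ∈ range (m + 1), coeffOfTail v n * lam ^ n| ≤ 2 ^ (N - 1 - m) * ε}

lemma sum_pow_three_mul_pow_two (N : ℕ) :
    ∑ m ∈ range N, (3 : ℝ) ^ m * 2 ^ (N - 1 - m) = 3 ^ N - 2 ^ N := by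
  have h := geom_sum₂_mul (3 : ℝ) 2 N
  norm_num at h
  exact h

lemma volume_badSet_le {s : Set ℝ} {C : ℝ} (hsub : HasSublevelBound s C) (N : ℕ) {ε : ℝ}
    (hε : 0 < ε) : volume (badSet s N ε) ≤ ENNReal.ofReal C * ENNReal.ofReal (3 ^ N * ε) := by
  calc volume (badSet s N ε)
      ≤ ∑ m ∈ range N, ∑ v : Fin m → SignType, volume {lam | lam ∈ s ∧
          |∑ n ∈ range (m + 1), coeffOfTail v n * lam ^ n| ≤ 2 ^ (N - 1 - m) * ε} :=
        (measure_biUnion_finset_le _ _).trans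
          (sum_le_sum fun m _ => measure_iUnion_fintype_le _ _)
    _ ≤ ∑ m ∈ range N, ∑ _v : Fin m → SignType,
          ENNReal.ofReal C * ENNReal.ofReal (2 ^ (N - 1 - m) * ε) := by
        gcongr with m _ v
        rw [← ENNReal.ofReal_mul' (by positivity)]
        exact hsub m _ rfl (coeffOfTail_mem v) _ (by positivity)
    _ = ENNReal.ofReal C * ENNReal.ofReal (∑ m ∈ range N, 3 ^ m * (2 ^ (N - 1 - m) * ε)) := by
        rw [ENNReal.ofReal_sum_of_nonneg fun m _ => by positivity, mul_sum]
        refine sum_congr rfl fun m _ => ?_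
        rw [sum_const, card_univ, Fintype.card_fun, Fintype.card_fin,
          show Fintype.card SignType = 3 from rfl, nsmul_eq_mul, ENNReal.ofReal_mul (by positivity)]
        simp [mul_left_comm]
    _ ≤ ENNReal.ofReal C * ENNReal.ofReal (3 ^ N * ε) := by
        gcongr
        simp_rw [← mul_assoc, ← sum_mul, sum_pow_three_mul_pow_two]
        gcongr
        linarith [pow_pos (two_pos : (0 : ℝ) < 2) N]

lemma ae_eventually_notMem_badSet {s : Set ℝ} {C : ℝ} (hsub : HasSublevelBound s C)
    {ε : ℕ → ℝ} (hε : ∀ N, 0 < ε N) (hsum : Summable fun N => (3 : ℝ) ^ N * ε N) :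
    ∀ᵐ lam, ∀ᶠ N in atTop, lam ∉ badSet s N (ε N) := by
  refine ae_eventually_notMem (ne_top_of_le_ne_top ?_
    (ENNReal.tsum_le_tsum fun N => volume_badSet_le hsub N (hε N)))
  rw [ENNReal.tsum_mul_left, ← ENNReal.ofReal_tsum_of_nonneg (fun N => by positivity [hε N]) hsum]
  exact ENNReal.mul_ne_top ENNReal.ofReal_ne_top ENNReal.ofReal_ne_top

def bitDiff : Bool → Bool → SignType
  | true, false => 1
  | false, true => -1
  | _, _ => 0

lemma bitDiff_mul (a b : Bool) (r : ℝ) :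
    (bitDiff a b : ℝ) * r = (if a then r else 0) - (if b then r else 0) := by
  cases a <;> cases b <;> simp [bitDiff]

lemma exists_sub_eq_sum_signType {lam x y : ℝ} {N : ℕ} (hx : x ∈ Aprime lam N)
    (hy : y ∈ Aprime lam N) :
    ∃ d : ℕ → SignType, x - y = ∑ n ∈ range N, (d n : ℝ) * lam ^ n := by
  obtain ⟨a, rfl⟩ := hx
  obtain ⟨b, rfl⟩ := hy
  refine ⟨fun n => if h : n < N then bitDiff (a ⟨n, h⟩) (b ⟨n, h⟩) else 0, ?_⟩
  rw [sum_range, ← sum_sub_distrib]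
  refine sum_congr rfl fun n _ => ?_
  simp [bitDiff_mul]

lemma SignType.mul_self_of_ne_zero {s : SignType} (hs : s ≠ 0) : s * s = 1 := by
  rcases SignType.trichotomy s with h | h | h <;> simp_all

lemma exists_tail_of_sum_ne_zero {lam : ℝ} {N : ℕ} (d : ℕ → SignType)
    (hS : ∑ n ∈ range N, (d n : ℝ) * lam ^ n ≠ 0) :
    ∃ m < N, ∃ v : Fin m → SignType, |∑ n ∈ range N, (d n : ℝ) * lam ^ n| =
      |lam| ^ (N - 1 - m) * |∑ n ∈ range (m + 1), coeffOfTail v n * lam ^ n| := by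
  classical
  -- factor out `lam ^ k` at the lowest nonzero digit `k`, and normalise that digit to `1`
  have hex : ∃ k, k < N ∧ d k ≠ 0 := by
    by_contra! h
    exact hS (sum_eq_zero fun n hn => by simp [h n (mem_range.1 hn)])
  set k := Nat.find hex
  obtain ⟨hkN, hk⟩ := Nat.find_spec hex
  have hlow : ∀ j < k, d j = 0 := fun j hj => by
    by_contra h
    exact Nat.find_min hex hj ⟨hj.trans hkN, h⟩
  set m := N - 1 - k
  set v : Fin m → SignType := fun i => d k * d (k + 1 + i)
  have hcoeff : ∀ j ≤ m, (d (k + j) : ℝ) = d k * coeffOfTail v j := by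
    rintro (_ | i) hi
    · simp [coeffOfTail]
    · simp only [coeffOfTail, show i < m by omega, dite_true, v, SignType.coe_mul, ← mul_assoc]
      rw [← SignType.coe_mul, SignType.mul_self_of_ne_zero hk, SignType.coe_one, one_mul,
        add_right_comm, add_assoc]
  refine ⟨m, by omega, v, ?_⟩
  have hsplit : ∑ n ∈ range N, (d n : ℝ) * lam ^ n =
      d k * lam ^ k * ∑ n ∈ range (m + 1), coeffOfTail v n * lam ^ n := by
    rw [show N = k + (m + 1) by omega, sum_range_add, mul_sum,
      sum_eq_zero fun j hj => by simp [hlow j (mem_range.1 hj)], zero_add]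
    refine sum_congr rfl fun j hj => ?_
    rw [hcoeff j (Nat.lt_succ_iff.1 (mem_range.1 hj)), pow_add]
    ring
  have hdk : |(d k : ℝ)| = 1 := by
    rcases SignType.trichotomy (d k) with h | h | h <;> simp_all
  rw [hsplit, abs_mul, abs_mul, hdk, one_mul, abs_pow, show N - 1 - m = k by omega]

lemma mem_badSet_of_mem_Aprime {s : Set ℝ} {N : ℕ} {ε lam x y : ℝ} (hs : lam ∈ s)
    (hlam : 1 / 2 ≤ lam) (hx : x ∈ Aprime lam N) (hy : y ∈ Aprime lam N) (hxy : x ≠ y)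
    (hε : |x - y| ≤ ε) : lam ∈ badSet s N ε := by
  obtain ⟨d, hd⟩ := exists_sub_eq_sum_signType hx hy
  rw [← sub_ne_zero, hd] at hxy
  rw [hd] at hε
  obtain ⟨m, hm, v, heq⟩ := exists_tail_of_sum_ne_zero d hxy
  refine Set.mem_iUnion₂.2 ⟨m, mem_range.2 hm, Set.mem_iUnion.2 ⟨v, hs, ?_⟩⟩
  set P := |∑ n ∈ range (m + 1), coeffOfTail v n * lam ^ n|
  have hpow : (1 / 2 : ℝ) ^ (N - 1 - m) ≤ |lam| ^ (N - 1 - m) :=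
    pow_le_pow_left₀ (by norm_num) (hlam.trans (le_abs_self lam)) _
  calc P = 2 ^ (N - 1 - m) * ((1 / 2) ^ (N - 1 - m) * P) := by
        rw [← mul_assoc, ← mul_pow]
        norm_num
    _ ≤ 2 ^ (N - 1 - m) * (|lam| ^ (N - 1 - m) * P) := by gcongr
    _ ≤ 2 ^ (N - 1 - m) * ε := by rw [← heq]; gcongr

lemma exists_mem_Aprime_of_minGap_lt {lam ε : ℝ} {N : ℕ} (hN : N ≠ 0) (h : minGap lam N < ε) :
    ∃ x ∈ Aprime lam N, ∃ y ∈ Aprime lam N, x ≠ y ∧ |x - y| < ε := by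
  have h0 : (0 : ℝ) ∈ Aprime lam N := ⟨fun _ => false, by simp⟩
  have h1 : (1 : ℝ) ∈ Aprime lam N := ⟨fun n => decide (n = ⟨0, Nat.pos_of_ne_zero hN⟩), by simp⟩
  obtain ⟨_, ⟨hpos, x, hx, y, hy, rfl⟩, hlt⟩ :=
    exists_lt_of_csInf_lt (by exact ⟨1, one_pos, 1, h1, 0, h0, by simp⟩) h
  exact ⟨x, hx, y, hy, sub_ne_zero.1 (abs_pos.1 hpos), hlt⟩

theorem stmt_13_general (C : ℝ)
    (hsub : ∀ (m : ℕ) (c : ℕ → ℝ), c 0 = 1 → (∀ n, c n ∈ ({-1, 0, 1} : Set ℝ)) →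
      ∀ ρ > 0,
        volume {lam : ℝ | lam ∈ Set.Icc (1/2 : ℝ) 0.668 ∧
            |∑ n ∈ Finset.range (m + 1), c n * lam ^ n| ≤ ρ}
          ≤ ENNReal.ofReal (C * ρ))
    (α : ℕ → ℝ) (hα : ∀ N, 0 < α N)
    (hsum : Summable (fun N : ℕ => (3 : ℝ) ^ N * α N)) :
    ∀ᵐ lam ∂(volume.restrict (Set.Icc (1/2 : ℝ) 0.668)),
      ∃ᶠ N in atTop, α N < minGap lam N := by
  have hgood := ae_eventually_notMem_badSet hsub (ε := fun N => 2 * α N)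
    (fun N => by linarith [hα N]) (by simpa [mul_left_comm] using hsum.mul_left 2)
  filter_upwards [ae_restrict_of_ae hgood, ae_restrict_mem measurableSet_Icc] with lam hlam hI
  refine (hlam.and (eventually_ne_atTop 0)).frequently.mono fun N ⟨hbad, hN⟩ => ?_
  by_contra! hle
  obtain ⟨x, hx, y, hy, hxy, hlt⟩ :=
    exists_mem_Aprime_of_minGap_lt hN (hle.trans_lt (show α N < 2 * α N by linarith [hα N]))
  exact hbad (mem_badSet_of_mem_Aprime hI hI.1 hx hy hxy hlt.le)

/-- Borel–Cantelli for minimal gaps: assuming the transversality sublevel bound on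
`I = [1/2, 0.668]` and `Σ_N 3^N α_N < ∞` with `α_N > 0`, for a.e. `λ ∈ I` one has
`g_N(λ) > α_N` for infinitely many `N`. -/
theorem stmt_13 (C : ℝ) (hC : 0 < C)
    (hsub : ∀ (m : ℕ) (c : ℕ → ℝ), c 0 = 1 → (∀ n, c n ∈ ({-1, 0, 1} : Set ℝ)) →
      ∀ ρ > 0,
        volume {lam : ℝ | lam ∈ Set.Icc (1/2 : ℝ) 0.668 ∧
            |∑ n ∈ Finset.range (m + 1), c n * lam ^ n| ≤ ρ}
          ≤ ENNReal.ofReal (C * ρ))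
    (α : ℕ → ℝ) (hα : ∀ N, 0 < α N)
    (hsum : Summable (fun N : ℕ => (3 : ℝ) ^ N * α N)) :
    ∀ᵐ lam ∂(volume.restrict (Set.Icc (1/2 : ℝ) 0.668)),
      ∃ᶠ N in atTop, α N < minGap lam N :=
  stmt_13_general C hsub α hα hsum
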